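/- Under the MAR setup, let H : Ω → ℝ^p be 𝒢-measurable with square-integrable components, let ρ : Ω → ℝ^p be the componentwise conditional expectation E[H | m], and set μ = E[H] ∈ ℝ^p, ξ_I = (R/π)·H and ξ_A = (R/π)·H + (1 − R/π)·ρ. Then E[ξ_I] = E[ξ_A] = μ, the p × p matrix E[(ξ_I − μ)(ξ_I − μ)ᵀ] − E[(ξ_A − μ)(ξ_A − μ)ᵀ] equals E[(R/π − 1)² ρρᵀ], and this matrix is positive semidefinite. -/

import Mathlib

open MeasureTheory ProbabilityTheory Matrix

private lemma aux_one_div : (1:ENNReal)/1 = 1/2 + 1/2 := by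
  rw [ENNReal.div_add_div_same, one_add_one_eq_two,
    ENNReal.div_self two_ne_zero ENNReal.ofNat_ne_top, div_one]

private lemma aux_integrable_mul {Ω : Type*} [mΩ : MeasurableSpace Ω] {P : Measure Ω}
    {f g : Ω → ℝ} (hf : MemLp f 2 P) (hg : MemLp g 2 P) :
    Integrable (fun ω => f ω * g ω) P :=
  memLp_one_iff_integrable.mp (hg.smul hf)

private lemma aux_memLp_two_condexp {Ω : Type*} [mΩ : MeasurableSpace Ω] {P : Measure Ω}
    [IsFiniteMeasure P] {m : MeasurableSpace Ω} (hm : m ≤ mΩ) {f : Ω → ℝ}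
    (hf : MemLp f 2 P) : MemLp (P[f|m]) 2 P := by
  have hint : Integrable f P := hf.integrable one_le_two
  have key : (condExpL2 ℝ ℝ hm (hf.toLp f) : Ω → ℝ) =ᵐ[P] P[f|m] := by
    refine ae_eq_condExp_of_forall_setIntegral_eq hm hint
      (fun s hs hμs => integrableOn_condExpL2_of_measure_ne_top hm hμs.ne _)
      (fun s hs hμs => ?_) (aestronglyMeasurable_condExpL2 hm _)
    rw [integral_condExpL2_eq hm (hf.toLp f) hs hμs.ne]
    exact integral_congr_ae (ae_restrict_of_ae hf.coeFn_toLp)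
  exact (Lp.memLp _).ae_eq key

/-- Matrix (covariance) form of the IPW/AIPW efficiency comparison.  With
`H : Ω → ℝ^p` (given componentwise) `𝒢`-measurable and square-integrable,
`ρ` the componentwise conditional expectation `E[H | m]`, `μv = E[H]`,
`ξ_I = (R/π)·H`, `ξ_A = (R/π)·H + (1 − R/π)·ρ`:
`E[ξ_I] = E[ξ_A] = μv`, the matrix
`E[(ξ_I − μv)(ξ_I − μv)ᵀ] − E[(ξ_A − μv)(ξ_A − μv)ᵀ]` equals
`E[(R/π − 1)² ρρᵀ]`, and this matrix is positive semidefinite. -/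
theorem stmt7 {Ω : Type*} (m 𝒢 : MeasurableSpace Ω) [mΩ : MeasurableSpace Ω] {P : Measure Ω} [IsProbabilityMeasure P]
    {p : ℕ}
    (hm𝒢 : m ≤ 𝒢) (h𝒢 : 𝒢 ≤ mΩ)
    (R π : Ω → ℝ) (hR : Measurable R) (hR01 : ∀ ω, R ω = 0 ∨ R ω = 1)
    (hπmeas : StronglyMeasurable[m] π) (ε : ℝ) (hε : 0 < ε)
    (hπbdd : ∀ᵐ ω ∂P, ε ≤ π ω ∧ π ω ≤ 1)
    (hMAR : π =ᵐ[P] P[R | 𝒢])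
    (H : Fin p → Ω → ℝ) (hHmeas : ∀ i, StronglyMeasurable[𝒢] (H i))
    (hH2 : ∀ i, MemLp (H i) 2 P)
    (ρ : Fin p → Ω → ℝ) (hρ : ∀ i, ρ i = P[H i | m])
    (μv : Fin p → ℝ) (hμv : ∀ i, μv i = ∫ ω, H i ω ∂P)
    (ξI ξA : Fin p → Ω → ℝ)
    (hξI : ∀ i, ξI i = fun ω => (R ω / π ω) * H i ω)
    (hξA : ∀ i, ξA i = fun ω => (R ω / π ω) * H i ω + (1 - R ω / π ω) * ρ i ω)
    (M : Matrix (Fin p) (Fin p) ℝ)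
    (hM : M = Matrix.of fun i j =>
      (∫ ω, (ξI i ω - μv i) * (ξI j ω - μv j) ∂P)
        - ∫ ω, (ξA i ω - μv i) * (ξA j ω - μv j) ∂P) :
    (∀ i, ∫ ω, ξI i ω ∂P = μv i) ∧ (∀ i, ∫ ω, ξA i ω ∂P = μv i) ∧
      (M = Matrix.of fun i j => ∫ ω, (R ω / π ω - 1) ^ 2 * (ρ i ω * ρ j ω) ∂P) ∧
      M.PosSemidef := by
  classical
  have hmle : m ≤ mΩ := hm𝒢.trans h𝒢
  -- measurability facts
  have hπm : Measurable[mΩ] π := hπmeas.measurable.mono hmle le_rfl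
  have hπ𝒢 : StronglyMeasurable[𝒢] π := hπmeas.mono hm𝒢
  have hR' : Measurable[mΩ] R := by first | exact hR.mono h𝒢 le_rfl | exact hR
  have hWmeas : Measurable[mΩ] fun ω => R ω / π ω := hR'.div hπm
  -- a.e. bounds
  have hπae : ∀ᵐ ω ∂P, 0 < π ω := hπbdd.mono fun ω h => lt_of_lt_of_le hε h.1
  have hRabs : ∀ ω, ‖R ω‖ ≤ 1 := fun ω => by rcases hR01 ω with h | h <;> simp [h]
  have hinvbd' : ∀ ω, ε ≤ π ω → ‖(π ω)⁻¹‖ ≤ ε⁻¹ := by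
    intro ω hω
    have h0 : 0 < π ω := lt_of_lt_of_le hε hω
    rw [Real.norm_eq_abs, abs_of_pos (by positivity)]
    gcongr
  have hWbd : ∀ᵐ ω ∂P, ‖R ω / π ω‖ ≤ ε⁻¹ := by
    filter_upwards [hπbdd] with ω hω
    have h0 : 0 < π ω := lt_of_lt_of_le hε hω.1
    rcases hR01 ω with h | h
    · simp only [h, zero_div, norm_zero]
      positivity
    · rw [h, one_div, Real.norm_eq_abs, abs_of_pos (by positivity)]
      gcongr
      exact hω.1
  have hWtop : MemLp (fun ω => R ω / π ω) ⊤ P :=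
    memLp_top_of_bound hWmeas.aestronglyMeasurable ε⁻¹ hWbd
  have hW1top : MemLp (fun ω => R ω / π ω - 1) ⊤ P := hWtop.sub (memLp_const 1)
  -- basic integrability
  have intH : ∀ i, Integrable (H i) P := fun i => (hH2 i).integrable one_le_two
  have hρ2 : ∀ i, MemLp (ρ i) 2 P := fun i => by
    rw [hρ i]; exact aux_memLp_two_condexp (mΩ := mΩ) hmle (hH2 i)
  have intρ : ∀ i, Integrable (ρ i) P := fun i => (hρ2 i).integrable one_le_two
  have hρm : ∀ i, StronglyMeasurable[m] (ρ i) := fun i => by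
    rw [hρ i]; exact stronglyMeasurable_condExp
  have hρ𝒢 : ∀ i, StronglyMeasurable[𝒢] (ρ i) := fun i => (hρm i).mono hm𝒢
  -- key identity at level 𝒢 : ∫ R g = ∫ π g
  have keyR : ∀ g : Ω → ℝ, StronglyMeasurable[𝒢] g → Integrable g P →
      ∫ ω, R ω * g ω ∂P = ∫ ω, π ω * g ω ∂P := by
    intro g hgm hgi
    have hRint : Integrable R P :=
      (memLp_top_of_bound hR'.aestronglyMeasurable 1 (ae_of_all _ hRabs)).integrable le_top
    have hgR : Integrable (g * R) P :=
      (hgi.bdd_mul hR'.aestronglyMeasurable (ae_of_all _ hRabs)).congr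
        (ae_of_all _ fun ω => mul_comm _ _)
    calc ∫ ω, R ω * g ω ∂P = ∫ ω, (g * R) ω ∂P := by
          refine integral_congr_ae (ae_of_all _ fun ω => ?_)
          simp [mul_comm]
      _ = ∫ ω, (P[g * R|𝒢]) ω ∂P := (integral_condExp h𝒢).symm
      _ = ∫ ω, (g * P[R|𝒢]) ω ∂P :=
          integral_congr_ae (condExp_mul_of_stronglyMeasurable_left hgm hgR hRint)
      _ = ∫ ω, π ω * g ω ∂P := by
          refine integral_congr_ae (hMAR.mono fun ω hω => ?_)
          simp only [Pi.mul_apply, ← hω, mul_comm]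
  -- key identity : ∫ (R/π) g = ∫ g for 𝒢-measurable g
  have keyW : ∀ g : Ω → ℝ, StronglyMeasurable[𝒢] g → Integrable g P →
      ∫ ω, (R ω / π ω) * g ω ∂P = ∫ ω, g ω ∂P := by
    intro g hgm hgi
    have hg' : StronglyMeasurable[𝒢] fun ω => (π ω)⁻¹ * g ω :=
      (hπ𝒢.measurable.inv.stronglyMeasurable).mul hgm
    have hgi' : Integrable (fun ω => (π ω)⁻¹ * g ω) P :=
      hgi.bdd_mul hπm.inv.aestronglyMeasurable (hπbdd.mono fun ω hω => hinvbd' ω hω.1)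
    have h2 : (fun ω => (R ω / π ω) * g ω) = fun ω => R ω * ((π ω)⁻¹ * g ω) := by
      funext ω; rw [div_eq_mul_inv]; ring
    rw [h2, keyR _ hg' hgi']
    refine integral_congr_ae (hπae.mono fun ω hω => ?_)
    show π ω * ((π ω)⁻¹ * g ω) = g ω
    rw [← mul_assoc, mul_inv_cancel₀ hω.ne', one_mul]
  -- key identity at level m : ∫ f g = ∫ f E[g|m] for bounded m-measurable f
  have keym : ∀ (f g : Ω → ℝ) (C : ℝ), StronglyMeasurable[m] f → (∀ᵐ ω ∂P, ‖f ω‖ ≤ C) →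
      Integrable g P → ∫ ω, f ω * g ω ∂P = ∫ ω, f ω * (P[g|m]) ω ∂P := by
    intro f g C hfm hfb hgi
    have hfg : Integrable (f * g) P :=
      hgi.bdd_mul (hfm.mono hmle).aestronglyMeasurable hfb
    calc ∫ ω, f ω * g ω ∂P = ∫ ω, (f * g) ω ∂P := rfl
      _ = ∫ ω, (P[f * g|m]) ω ∂P := (integral_condExp hmle).symm
      _ = ∫ ω, (f * P[g|m]) ω ∂P :=
          integral_congr_ae (condExp_mul_of_stronglyMeasurable_left hfm hfg hgi)
      _ = ∫ ω, f ω * (P[g|m]) ω ∂P := rfl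
  -- part 1
  have part1 : ∀ i, ∫ ω, ξI i ω ∂P = μv i := by
    intro i; rw [hξI i, hμv i]; exact keyW (H i) (hHmeas i) (intH i)
  -- part 2
  have intWH : ∀ i, Integrable (fun ω => (R ω / π ω) * H i ω) P := fun i =>
    (intH i).bdd_mul hWmeas.aestronglyMeasurable hWbd
  have intWρ : ∀ i, Integrable (fun ω => (R ω / π ω) * ρ i ω) P := fun i =>
    (intρ i).bdd_mul hWmeas.aestronglyMeasurable hWbd
  have part2 : ∀ i, ∫ ω, ξA i ω ∂P = μv i := by
    intro i
    have hfun : ξA i = fun ω => (R ω / π ω) * H i ω + (ρ i ω - (R ω / π ω) * ρ i ω) := by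
      rw [hξA i]; funext ω; ring
    have hsub : Integrable (fun ω => ρ i ω - (R ω / π ω) * ρ i ω) P :=
      (intρ i).sub (intWρ i)
    rw [hfun, integral_add (intWH i) hsub, integral_sub (intρ i) (intWρ i),
      keyW (ρ i) (hρ𝒢 i) (intρ i), keyW (H i) (hHmeas i) (intH i), hμv i]
    ring
  -- L² membership of the pieces
  have h2W1ρ : ∀ i, MemLp (fun ω => (R ω / π ω - 1) * ρ i ω) 2 P := fun i =>
    ((hρ2 i).smul hW1top).ae_eq (ae_of_all _ fun ω => rfl)
  have h2ξA : ∀ i, MemLp (ξA i) 2 P := fun i => by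
    rw [hξA i]
    have h1 : MemLp (fun ω => (R ω / π ω) * H i ω) 2 P :=
      ((hH2 i).smul hWtop).ae_eq (ae_of_all _ fun ω => rfl)
    have h2 : MemLp (fun ω => (1 - R ω / π ω) * ρ i ω) 2 P :=
      ((hρ2 i).smul ((memLp_const 1).sub hWtop)).ae_eq (ae_of_all _ fun ω => rfl)
    exact (h1.add h2).ae_eq (ae_of_all _ fun ω => rfl)
  have h2a : ∀ i, MemLp (fun ω => ξA i ω - μv i) 2 P := fun i =>
    ((h2ξA i).sub (memLp_const _)).ae_eq (ae_of_all _ fun ω => rfl)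
  -- cross terms vanish
  have crossZero : ∀ i j, ∫ ω, (ξA i ω - μv i) * ((R ω / π ω - 1) * ρ j ω) ∂P = 0 := by
    intro i j
    have hg1 : Integrable (fun ω => (H i ω - ρ i ω) * ρ j ω) P :=
      aux_integrable_mul (mΩ := mΩ) (((hH2 i).sub (hρ2 i)).ae_eq (ae_of_all _ fun ω => rfl)) (hρ2 j)
    have hg2 : Integrable (fun ω => (ρ i ω - μv i) * ρ j ω) P :=
      aux_integrable_mul (mΩ := mΩ) (((hρ2 i).sub (memLp_const _)).ae_eq (ae_of_all _ fun ω => rfl)) (hρ2 j)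
    have hsplit : (fun ω => (ξA i ω - μv i) * ((R ω / π ω - 1) * ρ j ω))
        = fun ω => (R ω / π ω) * (R ω / π ω - 1) * ((H i ω - ρ i ω) * ρ j ω)
          + ((R ω / π ω) * ((ρ i ω - μv i) * ρ j ω) - (ρ i ω - μv i) * ρ j ω) := by
      funext ω; simp only [hξA]; ring
    have hWW1 : Measurable[mΩ] fun ω => (R ω / π ω) * (R ω / π ω - 1) :=
      hWmeas.mul (hWmeas.sub measurable_const)
    have hWW1bd : ∀ᵐ ω ∂P, ‖(R ω / π ω) * (R ω / π ω - 1)‖ ≤ ε⁻¹ * (ε⁻¹ + 1) := by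
      filter_upwards [hWbd] with ω hω
      rw [norm_mul]
      have h1 : ‖R ω / π ω - 1‖ ≤ ε⁻¹ + 1 :=
        (norm_sub_le _ _).trans (by simpa using add_le_add_right hω 1)
      exact mul_le_mul hω h1 (norm_nonneg _) (by positivity)
    have int1 : Integrable
        (fun ω => (R ω / π ω) * (R ω / π ω - 1) * ((H i ω - ρ i ω) * ρ j ω)) P :=
      hg1.bdd_mul hWW1.aestronglyMeasurable hWW1bd
    have int2a : Integrable (fun ω => (R ω / π ω) * ((ρ i ω - μv i) * ρ j ω)) P :=
      hg2.bdd_mul hWmeas.aestronglyMeasurable hWbd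
    have hsub2 : Integrable
        (fun ω => (R ω / π ω) * ((ρ i ω - μv i) * ρ j ω) - (ρ i ω - μv i) * ρ j ω) P :=
      int2a.sub hg2
    rw [hsplit, integral_add int1 hsub2, integral_sub int2a hg2]
    have hg2meas : StronglyMeasurable[𝒢] fun ω => (ρ i ω - μv i) * ρ j ω :=
      (((hρ𝒢 i).sub stronglyMeasurable_const).mul (hρ𝒢 j))
    rw [keyW _ hg2meas hg2]
    have hfirst : ∫ ω, (R ω / π ω) * (R ω / π ω - 1) * ((H i ω - ρ i ω) * ρ j ω) ∂P = 0 := by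
      have hptw : ∀ ω, (R ω / π ω) * (R ω / π ω - 1) * ((H i ω - ρ i ω) * ρ j ω)
          = R ω * (((π ω)⁻¹ * (π ω)⁻¹ - (π ω)⁻¹) * ((H i ω - ρ i ω) * ρ j ω)) := by
        intro ω
        rcases hR01 ω with h | h
        · simp [h]
        · simp only [h]
          rw [div_eq_mul_inv]; ring
      have hπinv𝒢 : StronglyMeasurable[𝒢] fun ω => (π ω)⁻¹ :=
        hπ𝒢.measurable.inv.stronglyMeasurable
      have hφmeas : StronglyMeasurable[𝒢]
          fun ω => ((π ω)⁻¹ * (π ω)⁻¹ - (π ω)⁻¹) * ((H i ω - ρ i ω) * ρ j ω) :=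
        ((hπinv𝒢.mul hπinv𝒢).sub hπinv𝒢).mul (((hHmeas i).sub (hρ𝒢 i)).mul (hρ𝒢 j))
      have hφbd : ∀ᵐ ω ∂P, ‖(π ω)⁻¹ * (π ω)⁻¹ - (π ω)⁻¹‖ ≤ ε⁻¹ * ε⁻¹ + ε⁻¹ := by
        filter_upwards [hπbdd] with ω hω
        have hι : ‖(π ω)⁻¹‖ ≤ ε⁻¹ := hinvbd' ω hω.1
        calc ‖(π ω)⁻¹ * (π ω)⁻¹ - (π ω)⁻¹‖
            ≤ ‖(π ω)⁻¹ * (π ω)⁻¹‖ + ‖(π ω)⁻¹‖ := norm_sub_le _ _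
          _ ≤ ε⁻¹ * ε⁻¹ + ε⁻¹ := by
              rw [norm_mul]
              exact add_le_add (mul_le_mul hι hι (norm_nonneg _) (by positivity)) hι
      have hφint : Integrable
          (fun ω => ((π ω)⁻¹ * (π ω)⁻¹ - (π ω)⁻¹) * ((H i ω - ρ i ω) * ρ j ω)) P :=
        hg1.bdd_mul ((hπm.inv.mul hπm.inv).sub hπm.inv).aestronglyMeasurable hφbd
      rw [integral_congr_ae (ae_of_all _ hptw), keyR _ hφmeas hφint]
      have hsimp : ∀ᵐ ω ∂P,
          π ω * (((π ω)⁻¹ * (π ω)⁻¹ - (π ω)⁻¹) * ((H i ω - ρ i ω) * ρ j ω))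
            = ((π ω)⁻¹ - 1) * ((H i ω - ρ i ω) * ρ j ω) := by
        filter_upwards [hπae] with ω h0
        have e : π ω * ((π ω)⁻¹ * (π ω)⁻¹ - (π ω)⁻¹) = (π ω)⁻¹ - 1 := by
          field_simp
        rw [← mul_assoc, e]
      rw [integral_congr_ae hsimp]
      have hfm : StronglyMeasurable[m] fun ω => (π ω)⁻¹ - 1 :=
        (hπmeas.measurable.inv.stronglyMeasurable).sub stronglyMeasurable_const
      have hfb : ∀ᵐ ω ∂P, ‖(π ω)⁻¹ - 1‖ ≤ ε⁻¹ + 1 := by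
        filter_upwards [hπbdd] with ω hω
        exact (norm_sub_le _ _).trans (by simpa using add_le_add_right (hinvbd' ω hω.1) 1)
      rw [keym _ _ (ε⁻¹ + 1) hfm hfb hg1]
      have hcond : P[fun ω => (H i ω - ρ i ω) * ρ j ω|m] =ᵐ[P] 0 := by
        have h1 : (fun ω => (H i ω - ρ i ω) * ρ j ω)
            = ρ j * fun ω => H i ω - ρ i ω := by funext ω; simp [mul_comm]
        rw [h1]
        have hint' : Integrable (ρ j * fun ω => H i ω - ρ i ω) P :=
          (aux_integrable_mul (mΩ := mΩ) (hρ2 j) (((hH2 i).sub (hρ2 i)).ae_eq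
            (ae_of_all _ fun ω => rfl))).congr (ae_of_all _ fun ω => rfl)
        have h2 := condExp_mul_of_stronglyMeasurable_left (hρm j) hint' ((intH i).sub (intρ i))
        refine h2.trans ?_
        have h3 : P[fun ω => H i ω - ρ i ω|m] =ᵐ[P] 0 := by
          refine (condExp_sub (intH i) (intρ i) m).trans ?_
          rw [condExp_of_stronglyMeasurable hmle (hρm i) (intρ i), hρ i]
          simp
        calc ρ j * P[fun ω => H i ω - ρ i ω|m] =ᵐ[P] ρ j * 0 := by
              filter_upwards [h3] with ω hω
              simp [Pi.mul_apply, hω]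
          _ = 0 := by simp
      have : ∀ᵐ ω ∂P, ((π ω)⁻¹ - 1) * (P[fun ω => (H i ω - ρ i ω) * ρ j ω|m]) ω = 0 := by
        filter_upwards [hcond] with ω hω
        simp [hω]
      rw [integral_congr_ae this, integral_zero]
    rw [hfirst]; ring
  -- integrability of the pure-weight products
  have intcd : ∀ i j, Integrable
      (fun ω => (R ω / π ω - 1) ^ 2 * (ρ i ω * ρ j ω)) P := by
    intro i j
    exact (aux_integrable_mul (mΩ := mΩ) (h2W1ρ i) (h2W1ρ j)).congr (ae_of_all _ fun ω => by ring)
  -- matrix entries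
  have Mij : ∀ i j, M i j = ∫ ω, (R ω / π ω - 1) ^ 2 * (ρ i ω * ρ j ω) ∂P := by
    intro i j
    rw [hM]
    simp only [Matrix.of_apply]
    have intab : Integrable (fun ω => (ξA i ω - μv i) * (ξA j ω - μv j)) P :=
      aux_integrable_mul (mΩ := mΩ) (h2a i) (h2a j)
    have intad : Integrable (fun ω => (ξA i ω - μv i) * ((R ω / π ω - 1) * ρ j ω)) P :=
      aux_integrable_mul (mΩ := mΩ) (h2a i) (h2W1ρ j)
    have intcb : Integrable
        (fun ω => ((R ω / π ω - 1) * ρ i ω) * (ξA j ω - μv j)) P :=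
      aux_integrable_mul (mΩ := mΩ) (h2W1ρ i) (h2a j)
    have hexp : (fun ω => (ξI i ω - μv i) * (ξI j ω - μv j))
        = fun ω => (ξA i ω - μv i) * (ξA j ω - μv j)
          + ((ξA i ω - μv i) * ((R ω / π ω - 1) * ρ j ω)
          + (((R ω / π ω - 1) * ρ i ω) * (ξA j ω - μv j)
          + (R ω / π ω - 1) ^ 2 * (ρ i ω * ρ j ω))) := by
      funext ω; simp only [hξI, hξA]; ring
    have s1 : Integrable (fun ω => ((R ω / π ω - 1) * ρ i ω) * (ξA j ω - μv j)
        + (R ω / π ω - 1) ^ 2 * (ρ i ω * ρ j ω)) P := intcb.add (intcd i j)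
    have s2 : Integrable (fun ω => (ξA i ω - μv i) * ((R ω / π ω - 1) * ρ j ω)
        + (((R ω / π ω - 1) * ρ i ω) * (ξA j ω - μv j)
          + (R ω / π ω - 1) ^ 2 * (ρ i ω * ρ j ω))) P := intad.add s1
    rw [hexp, integral_add intab s2, integral_add intad s1, integral_add intcb (intcd i j),
      crossZero i j]
    have hcb : ∫ ω, ((R ω / π ω - 1) * ρ i ω) * (ξA j ω - μv j) ∂P = 0 := by
      rw [integral_congr_ae (ae_of_all _ fun ω =>
        (by ring : ((R ω / π ω - 1) * ρ i ω) * (ξA j ω - μv j)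
          = (ξA j ω - μv j) * ((R ω / π ω - 1) * ρ i ω)))]
      exact crossZero j i
    rw [hcb]
    ring
  have Mform : M = Matrix.of fun i j => ∫ ω, (R ω / π ω - 1) ^ 2 * (ρ i ω * ρ j ω) ∂P :=
    Matrix.ext fun i j => by rw [Mij i j]; simp [Matrix.of_apply]
  refine ⟨part1, part2, Mform, posSemidef_iff_dotProduct_mulVec.mpr ⟨?_, ?_⟩⟩
  · -- Hermitian
    refine Matrix.ext fun i j => ?_
    rw [Matrix.conjTranspose_apply, star_trivial, Mij i j, Mij j i]
    exact integral_congr_ae (ae_of_all _ fun ω => by ring)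
  · -- quadratic form nonneg
    intro x
    have hxs : star x = x := funext fun i => star_trivial _
    rw [hxs]
    have hterm : ∀ i j : Fin p, Integrable
        (fun ω => (x i * x j) * ((R ω / π ω - 1) ^ 2 * (ρ i ω * ρ j ω))) P := fun i j =>
      (intcd i j).const_mul _
    have hrw : x ⬝ᵥ M.mulVec x
        = ∫ ω, (R ω / π ω - 1) ^ 2 * (∑ i, x i * ρ i ω) ^ 2 ∂P := by
      calc x ⬝ᵥ M.mulVec x = ∑ i, ∑ j, x i * (M i j * x j) := by
            simp [dotProduct, Matrix.mulVec, Finset.mul_sum]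
        _ = ∑ i, ∑ j, ∫ ω, (x i * x j) * ((R ω / π ω - 1) ^ 2 * (ρ i ω * ρ j ω)) ∂P := by
            refine Finset.sum_congr rfl fun i _ => Finset.sum_congr rfl fun j _ => ?_
            rw [Mij i j, integral_const_mul]
            ring
        _ = ∫ ω, ∑ i, ∑ j, (x i * x j) * ((R ω / π ω - 1) ^ 2 * (ρ i ω * ρ j ω)) ∂P := by
            rw [integral_finset_sum _ (fun i _ => integrable_finset_sum _ fun j _ => hterm i j)]
            refine Finset.sum_congr rfl fun i _ => ?_
            rw [integral_finset_sum _ fun j _ => hterm i j]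
        _ = ∫ ω, (R ω / π ω - 1) ^ 2 * (∑ i, x i * ρ i ω) ^ 2 ∂P := by
            refine integral_congr_ae (ae_of_all _ fun ω => ?_)
            show ∑ i, ∑ j, (x i * x j) * ((R ω / π ω - 1) ^ 2 * (ρ i ω * ρ j ω))
              = (R ω / π ω - 1) ^ 2 * (∑ i, x i * ρ i ω) ^ 2
            rw [pow_two (∑ i, x i * ρ i ω), Finset.sum_mul_sum, Finset.mul_sum]
            refine Finset.sum_congr rfl fun i _ => ?_
            rw [Finset.mul_sum]
            refine Finset.sum_congr rfl fun j _ => ?_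
            ring
    rw [hrw]
    refine integral_nonneg fun ω => ?_
    positivity
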